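/- For every n ≥ 1, the edgeless graph A_n on n vertices (the anticlique on n vertices) satisfies ρ(A_n) = n(n+1)/2. -/

import Mathlib

/-- `ArrowsR G H` (written `G →r H`) means: every proper vertex coloring of `G`
contains a rainbow induced subgraph isomorphic to `H`, i.e. an induced copy of `H`
(a graph embedding) whose vertices receive pairwise distinct colors. -/
def ArrowsR {α β : Type} (G : SimpleGraph α) (H : SimpleGraph β) : Prop :=
  ∀ c : α → ℕ, (∀ u v : α, G.Adj u v → c u ≠ c v) →
    ∃ f : H ↪g G, Function.Injective fun h => c (f h)

/-- `rho H` is the minimum number of vertices of a graph `G` with `G →r H`. -/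
noncomputable def rho {β : Type} (H : SimpleGraph β) : ℕ :=
  sInf {m : ℕ | ∃ G : SimpleGraph (Fin m), ArrowsR G H}

/-!
Upper bound: in the disjoint union of cliques `K_1, …, K_n`, every proper colouring lets one
pick greedily from `K_k` a vertex whose colour differs from the `k - 1` colours already chosen,
since `K_k` carries `k` distinct colours.

Lower bound: if `G →r A_{n+1}` and `M` is a maximum independent set, then `|M| ≥ n + 1`, and
giving `M` one private colour shows that a rainbow independent set meets `M` at most once, so
`G - M →r A_n`. By induction `|G| ≥ (n + 1) + n + ⋯ + 1`.
-/

open Finset SimpleGraph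

variable {α β : Type} {G : SimpleGraph α}

theorem arrowsR_bot_iff :
    ArrowsR G (⊥ : SimpleGraph β) ↔
      ∀ c : α → ℕ, (∀ u v, G.Adj u v → c u ≠ c v) →
        ∃ f : β → α, Function.Injective (c ∘ f) ∧ ∀ i j, ¬ G.Adj (f i) (f j) := by
  refine forall₂_congr fun c _ => ⟨fun ⟨f, hf⟩ => ⟨f, hf, fun i j => by simp⟩, ?_⟩
  rintro ⟨f, hf, hind⟩
  exact ⟨⟨⟨f, hf.of_comp⟩, by simp [hind]⟩, hf⟩

theorem ArrowsR.of_iso {α' : Type} {G' : SimpleGraph α'} {H : SimpleGraph β} (e : G ≃g G')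
    (h : ArrowsR G H) : ArrowsR G' H := by
  intro c hc
  obtain ⟨f, hf⟩ := h (c ∘ e) fun u v huv => hc _ _ (e.map_adj_iff.mpr huv)
  exact ⟨e.toEmbedding.comp f, hf⟩

theorem ArrowsR.le_indepNum [Finite α] {n : ℕ} (h : ArrowsR G (⊥ : SimpleGraph (Fin n))) :
    n ≤ G.indepNum := by
  classical
  obtain ⟨c, hc⟩ := Countable.exists_injective_nat α
  obtain ⟨f, hf, hind⟩ := arrowsR_bot_iff.mp h c fun u v huv => hc.ne (G.ne_of_adj huv)
  have hindep : G.IsIndepSet (univ.image f : Finset α) := by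
    simp only [coe_image, coe_univ, Set.image_univ]
    rintro _ ⟨i, rfl⟩ _ ⟨j, rfl⟩ _
    exact hind i j
  simpa [card_image_of_injective _ hf.of_comp] using hindep.card_le_indepNum

theorem ArrowsR.induce_compl {n : ℕ} (h : ArrowsR G (⊥ : SimpleGraph (Fin (n + 1))))
    {M : Set α} (hM : G.IsIndepSet M) : ArrowsR (G.induce Mᶜ) (⊥ : SimpleGraph (Fin n)) := by
  classical
  rw [arrowsR_bot_iff] at h ⊢
  intro c' hc'
  let c : α → ℕ := fun x => if hx : x ∈ M then 0 else c' ⟨x, hx⟩ + 1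
  have hc : ∀ u v, G.Adj u v → c u ≠ c v := by
    intro u v huv
    by_cases hu : u ∈ M <;> by_cases hv : v ∈ M <;> simp only [c, hu, hv, dite_true, dite_false]
    · exact absurd huv (hM hu hv (G.ne_of_adj huv))
    · omega
    · omega
    · simpa using hc' ⟨u, hu⟩ ⟨v, hv⟩ huv
  obtain ⟨f, hf, hind⟩ := h c hc
  -- two vertices of `f` in `M` would share the colour `0`
  obtain ⟨i₀, hi₀⟩ : ∃ i₀ : Fin (n + 1), ∀ j, f (i₀.succAbove j) ∉ M := by
    by_cases hfM : ∃ i, f i ∈ M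
    · obtain ⟨i, hi⟩ := hfM
      refine ⟨i, fun j hj => Fin.succAbove_ne i j (hf ?_)⟩
      simp [c, hi, hj]
    · push Not at hfM
      exact ⟨0, fun j => hfM _⟩
  refine ⟨fun j => ⟨f (i₀.succAbove j), hi₀ j⟩, fun j k hjk => ?_,
    fun j k => by simpa using hind _ _⟩
  have : c (f (i₀.succAbove j)) = c (f (i₀.succAbove k)) := by simpa [c, hi₀] using hjk
  exact Fin.succAbove_right_injective (hf this)

theorem ArrowsR.sum_range_le_card [Fintype α] {n : ℕ}
    (h : ArrowsR G (⊥ : SimpleGraph (Fin n))) :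
    ∑ i ∈ range (n + 1), i ≤ Fintype.card α := by
  induction n generalizing α with
  | zero => simp
  | succ n ih =>
    classical
    obtain ⟨M, hM⟩ := G.exists_isNIndepSet_indepNum
    have hcompl := ih (h.induce_compl hM.isIndepSet)
    simp only [Fintype.card_compl_set, coe_sort_coe, Fintype.card_coe, hM.card_eq] at hcompl
    have hM_le := hM.card_eq ▸ M.card_le_univ
    have := h.le_indepNum
    rw [sum_range_succ]
    omega

theorem ArrowsR.sum_top {n : ℕ} (h : ArrowsR G (⊥ : SimpleGraph (Fin n))) :
    ArrowsR (G ⊕g (⊤ : SimpleGraph (Fin (n + 1)))) (⊥ : SimpleGraph (Fin (n + 1))) := by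
  rw [arrowsR_bot_iff] at h ⊢
  intro c hc
  obtain ⟨f, hf, hind⟩ := h (c ∘ Sum.inl) fun u v huv => hc _ _ (sum_adj_inl.mpr huv)
  -- the clique shows `n + 1` colours, only `n` of which occur on `f`
  obtain ⟨j, hj⟩ : ∃ j, c (.inr j) ∉ Set.range (c ∘ Sum.inl ∘ f) := by
    by_contra! hall
    have hclique : Set.InjOn (c ∘ Sum.inr) (univ : Finset (Fin (n + 1))) :=
      fun a _ b _ hab => by_contra fun hne => hc _ _ (by simpa using hne) hab
    have := card_le_card_of_injOn _ (fun a _ => by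
      obtain ⟨i, hi⟩ := hall a
      exact mem_image.mpr ⟨i, mem_univ _, hi⟩) hclique
    simpa using this.trans card_image_le
  refine ⟨Fin.cons (.inr j) (Sum.inl ∘ f), ?_, fun i k => ?_⟩
  · rw [Fin.comp_cons, Fin.cons_injective_iff]
    exact ⟨hj, hf⟩
  · cases i using Fin.cases <;> cases k using Fin.cases <;> simp [hind]

theorem exists_arrowsR_bot (n : ℕ) : ∃ (α : Type) (_ : Fintype α) (G : SimpleGraph α),
    Fintype.card α = ∑ i ∈ range (n + 1), i ∧ ArrowsR G (⊥ : SimpleGraph (Fin n)) := by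
  induction n with
  | zero =>
    refine ⟨Empty, inferInstance, ⊥, by simp, arrowsR_bot_iff.mpr fun c _ => ?_⟩
    exact ⟨Fin.elim0, fun i => i.elim0, fun i => i.elim0⟩
  | succ n ih =>
    obtain ⟨α, _, G, hcard, hG⟩ := ih
    exact ⟨α ⊕ Fin (n + 1), inferInstance, _, by simp [hcard, sum_range_succ _ (n + 1)],
      hG.sum_top⟩

theorem rho_bot (n : ℕ) : rho (⊥ : SimpleGraph (Fin n)) = ∑ i ∈ range (n + 1), i := by
  obtain ⟨α, _, G, hcard, hG⟩ := exists_arrowsR_bot n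
  refine IsLeast.csInf_eq ⟨⟨_, hG.of_iso (Iso.map (Fintype.equivFinOfCardEq hcard) G)⟩, ?_⟩
  rintro m ⟨G', hG'⟩
  simpa using hG'.sum_range_le_card

theorem stmt4_general (n : ℕ) :
    rho (⊥ : SimpleGraph (Fin n)) = n * (n + 1) / 2 := by
  rw [rho_bot, sum_range_id, Nat.add_sub_cancel, mul_comm]

/-- `ρ(A_n) = n(n+1)/2` for the edgeless graph on `n ≥ 1` vertices. -/
theorem stmt4 (n : ℕ) (hn : 1 ≤ n) :
    rho (⊥ : SimpleGraph (Fin n)) = n * (n + 1) / 2 :=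
  stmt4_general n
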